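/- arXiv:1509.06213 — 2 statements merged into one kernel-verified Lean document; each statement's English description precedes it below -/
import Mathlib

section
/- Let p be a prime with p ≡ 3 (mod 4), and let G ≤ Sym(F_p) be the group of affine maps z ↦ az + b with a a nonzero square in F_p and b ∈ F_p. Then no non-identity element of G fixes a 2-element subset of F_p setwise. -/
/-! An affine map `z ↦ a z + b` fixing two distinct points is the identity, and one swapping them
has `a = -1`. For `p ≡ 3 (mod 4)`, `-1` is not a square in `𝔽_p`. -/

section AffineTwoPoints

variable {R : Type*} [CommRing R] [IsDomain R] {a b i j : R}

theorem affine_eq_id_of_fixes_two_points (hij : i ≠ j) (hi : a * i + b = i)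
    (hj : a * j + b = j) : a = 1 ∧ b = 0 := by
  have ha : a = 1 :=
    mul_right_cancel₀ (sub_ne_zero.mpr hij) (by linear_combination hi - hj)
  subst ha
  exact ⟨rfl, by linear_combination hi⟩

theorem eq_neg_one_of_affine_swaps (hij : i ≠ j) (hi : a * i + b = j) (hj : a * j + b = i) :
    a = -1 :=
  mul_right_cancel₀ (sub_ne_zero.mpr hij) (by linear_combination hi - hj)

end AffineTwoPoints

theorem stmt_5_general (p : ℕ) [Fact p.Prime] (hp : p % 4 = 3)
    (a b : ZMod p) (hsq : IsSquare a) (hne : ¬(a = 1 ∧ b = 0))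
    (i j : ZMod p) (hij : i ≠ j) :
    ¬((a * i + b = i ∧ a * j + b = j) ∨ (a * i + b = j ∧ a * j + b = i)) := by
  rintro (⟨hi, hj⟩ | ⟨hi, hj⟩)
  · exact hne (affine_eq_id_of_fixes_two_points hij hi hj)
  · have hsq_neg_one : IsSquare (-1 : ZMod p) := eq_neg_one_of_affine_swaps hij hi hj ▸ hsq
    exact ZMod.exists_sq_eq_neg_one_iff.mp hsq_neg_one hp

/-- For `p ≡ 3 (mod 4)` prime, no non-identity affine map `z ↦ a z + b` of `𝔽_p` with
`a` a nonzero square fixes a 2-element subset of `𝔽_p` setwise. -/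
theorem stmt_5 (p : ℕ) [Fact p.Prime] (hp : p % 4 = 3)
    (a b : ZMod p) (ha : a ≠ 0) (hsq : IsSquare a) (hne : ¬(a = 1 ∧ b = 0))
    (i j : ZMod p) (hij : i ≠ j) :
    ¬((a * i + b = i ∧ a * j + b = j) ∨ (a * i + b = j ∧ a * j + b = i)) :=
  stmt_5_general p hp a b hsq hne i j hij
end

section
/- The permutation group G ≤ S_7 generated by s = (1 2 3)(4 5 6) and t = (1 3 4 2 5 6 7) has order 21, is non-abelian, and no non-identity element of G fixes any 2-element subset of {1,...,7} setwise. -/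
/-!
Since `s t = t⁴ s`, every element of `G` is a word `t^a s^b` with `a < 7` and `b < 3`, so
`|G| ≤ 21`; as `t` and `s` have orders 7 and 3, Lagrange gives `21 ∣ |G|`. An element of odd order
cannot swap two points, because it is a power of its square, which fixes both. That no
non-identity word `t^a s^b` fixes two points is a finite check.
-/

open Equiv

section Metacyclic

variable {M : Type*} [Monoid M] {s t : M} {k : ℕ}

theorem pow_mul_pow_eq_of_mul_eq (h : s * t = t ^ k * s) (a b : ℕ) :
    s ^ b * t ^ a = t ^ (k ^ b * a) * s ^ b := by
  have hs (a : ℕ) : s * t ^ a = t ^ (k * a) * s := by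
    induction a with
    | zero => simp
    | succ n ih =>
      rw [pow_succ, ← mul_assoc, ih, mul_assoc, h, ← mul_assoc, ← pow_add, mul_add_one]
  induction b with
  | zero => simp
  | succ n ih =>
    rw [pow_succ', mul_assoc, ih, ← mul_assoc, hs, mul_assoc, pow_succ', mul_assoc k]

theorem exists_pow_mul_pow_of_mem_closure (h : s * t = t ^ k * s) {g : M}
    (hg : g ∈ Submonoid.closure {s, t}) : ∃ a b : ℕ, t ^ a * s ^ b = g := by
  induction hg using Submonoid.closure_induction with
  | mem g hg =>
    rcases hg with rfl | rfl
    · exact ⟨0, 1, by simp⟩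
    · exact ⟨1, 0, by simp⟩
  | one => exact ⟨0, 0, by simp⟩
  | mul x y _ _ hx hy =>
    obtain ⟨a, b, rfl⟩ := hx
    obtain ⟨c, d, rfl⟩ := hy
    exact ⟨a + k ^ b * c, b + d, by
      rw [mul_assoc, ← mul_assoc (s ^ b), pow_mul_pow_eq_of_mul_eq h, pow_add, pow_add]
      simp only [mul_assoc]⟩

end Metacyclic

theorem MulAction.smul_eq_self_of_sq_smul_eq_self {G α : Type*} [Group G] [MulAction G α]
    {g : G} {x : α} (hg : Odd (orderOf g)) (hx : (g ^ 2) • x = x) : g • x = x := by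
  obtain ⟨m, hm⟩ := hg
  have : g = (g ^ 2) ^ (m + 1) := by
    rw [← pow_mul, show 2 * (m + 1) = orderOf g + 1 by omega, pow_succ, pow_orderOf_eq_one,
      one_mul]
  rw [this]
  exact pow_mem (MulAction.mem_stabilizer_iff.mpr hx) _

theorem Equiv.Perm.eq_of_apply_eq_of_apply_eq_of_odd_orderOf {α : Type*} {g : Perm α}
    (hg : Odd (orderOf g)) {i j : α} (hi : g i = j) (hj : g j = i) : i = j := by
  have hsq : (g ^ 2) • i = i := by rw [pow_two, mul_smul, Perm.smul_def, Perm.smul_def, hi, hj]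
  rw [← hi]
  exact (MulAction.smul_eq_self_of_sq_smul_eq_self hg hsq).symm

namespace Frobenius21

def s : Perm (Fin 7) := ([0, 1, 2] : List (Fin 7)).formPerm * ([3, 4, 5] : List (Fin 7)).formPerm

def t : Perm (Fin 7) := ([0, 2, 3, 1, 4, 5, 6] : List (Fin 7)).formPerm

def G : Subgroup (Perm (Fin 7)) := Subgroup.closure {s, t}

theorem s_mem : s ∈ G := Subgroup.subset_closure (Set.mem_insert _ _)

theorem t_mem : t ∈ G := Subgroup.subset_closure (Set.mem_insert_of_mem _ rfl)

set_option maxRecDepth 2000 in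
theorem s_mul_t : s * t = t ^ 4 * s := by decide

theorem s_mul_t_ne : s * t ≠ t * s := by decide

theorem orderOf_s : orderOf s = 3 := orderOf_eq_prime (by decide) (by decide)

set_option maxRecDepth 2000 in
theorem orderOf_t : orderOf t = 7 :=
  have : Fact (Nat.Prime 7) := ⟨by norm_num⟩
  orderOf_eq_prime (by decide) (by decide)

theorem exists_pow_mul_pow_eq_of_mem {g : Perm (Fin 7)} (hg : g ∈ G) :
    ∃ p : Fin 7 × Fin 3, t ^ (p.1 : ℕ) * s ^ (p.2 : ℕ) = g := by
  rw [← Subgroup.mem_toSubmonoid, G, Subgroup.closure_toSubmonoid_of_finite] at hg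
  obtain ⟨a, b, rfl⟩ := exists_pow_mul_pow_of_mem_closure s_mul_t hg
  refine ⟨(⟨a % 7, Nat.mod_lt _ (by norm_num)⟩, ⟨b % 3, Nat.mod_lt _ (by norm_num)⟩), ?_⟩
  show t ^ (a % 7) * s ^ (b % 3) = _
  rw [← pow_mod_orderOf t a, ← pow_mod_orderOf s b, orderOf_t, orderOf_s]

theorem card_G : Nat.card G = 21 := by
  have hle : Nat.card G ≤ 21 := calc
    Nat.card G ≤ Nat.card (Set.range fun p : Fin 7 × Fin 3 => t ^ (p.1 : ℕ) * s ^ (p.2 : ℕ)) :=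
      Nat.card_mono (Set.toFinite _) fun g hg => exists_pow_mul_pow_eq_of_mem hg
    _ ≤ Nat.card (Fin 7 × Fin 3) := Finite.card_range_le _
    _ = 21 := by simp
  have hdvd : 21 ∣ Nat.card G := by
    have h3 := orderOf_s ▸ G.orderOf_dvd_natCard s_mem
    have h7 := orderOf_t ▸ G.orderOf_dvd_natCard t_mem
    exact Nat.Coprime.mul_dvd_of_dvd_of_dvd (by norm_num) h3 h7
  exact le_antisymm hle (Nat.le_of_dvd Nat.card_pos hdvd)

set_option maxRecDepth 10000 in
theorem eq_one_of_apply_eq_self {g : Perm (Fin 7)} (hg : g ∈ G) {i j : Fin 7} (hij : i ≠ j)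
    (hi : g i = i) (hj : g j = j) : g = 1 := by
  obtain ⟨p, rfl⟩ := exists_pow_mul_pow_eq_of_mem hg
  clear hg
  revert p i j
  decide

theorem odd_orderOf {g : Perm (Fin 7)} (hg : g ∈ G) : Odd (orderOf g) :=
  Odd.of_dvd_nat (by decide) (card_G ▸ G.orderOf_dvd_natCard hg)

theorem not_forall_mul_comm : ¬ ∀ x y : G, x * y = y * x := fun hcomm =>
  s_mul_t_ne <| by
    simpa only [Subgroup.coe_mul] using congrArg Subtype.val (hcomm ⟨s, s_mem⟩ ⟨t, t_mem⟩)

end Frobenius21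

/-- The subgroup of `S_7` generated by `s = (1 2 3)(4 5 6)` and `t = (1 3 4 2 5 6 7)`
(0-indexed: `(0 1 2)(3 4 5)` and `(0 2 3 1 4 5 6)`) has order 21, is non-abelian, and no
non-identity element fixes any 2-element subset of the 7 points setwise. -/
theorem stmt_8
    (s t : Equiv.Perm (Fin 7))
    (hs : s = ([0, 1, 2] : List (Fin 7)).formPerm * ([3, 4, 5] : List (Fin 7)).formPerm)
    (ht : t = ([0, 2, 3, 1, 4, 5, 6] : List (Fin 7)).formPerm)
    (G : Subgroup (Equiv.Perm (Fin 7))) (hG : G = Subgroup.closure {s, t}) :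
    Nat.card G = 21 ∧ (¬ ∀ x y : G, x * y = y * x) ∧
      ∀ g ∈ G, g ≠ 1 → ∀ i j : Fin 7, i ≠ j →
        ¬((g i = i ∧ g j = j) ∨ (g i = j ∧ g j = i)) := by
  obtain rfl : G = Frobenius21.G := by rw [hG, hs, ht]; rfl
  refine ⟨Frobenius21.card_G, Frobenius21.not_forall_mul_comm, ?_⟩
  rintro g hg hg1 i j hij (⟨hi, hj⟩ | ⟨hi, hj⟩)
  · exact hg1 (Frobenius21.eq_one_of_apply_eq_self hg hij hi hj)
  · exact hij (Perm.eq_of_apply_eq_of_apply_eq_of_odd_orderOf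
      (Frobenius21.odd_orderOf hg) hi hj)
end
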